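/- Let μ be a probability measure on X, let N : X × ℝ^p → ℝ be such that for each x the map θ ↦ N(x, θ) is differentiable at θ₀, with the outer product x ↦ ∇_θN(x, θ₀) ∇_θN(x, θ₀)ᵀ μ-integrable, and define M(θ₀) = ∫_X ∇_θN(x, θ₀) ∇_θN(x, θ₀)ᵀ dμ(x). If T : ℝ → ℝ^p is a curve with T(0) = θ₀, differentiable at 0 with velocity v = T'(0), satisfying |N(x, T(α)) − N(x, θ₀)|² ≤ ε α² for all x ∈ X and all α in a neighborhood of 0, then vᵀ M(θ₀) v ≤ ε. -/

import Mathlib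

open MeasureTheory Matrix Topology

/-! Along the symmetry curve, `α ↦ N(x, T α)` has derivative `∇_θN(x, θ₀) ⬝ v` at `0`, and the
hypothesis bounds its difference quotients, so `(∇_θN(x, θ₀) ⬝ v)² ≤ ε` for every `x`. Since
`vᵀ M(θ₀) v = ∫ (∇_θN(x, θ₀) ⬝ v)² dμ` and `μ` is a probability measure, the bound integrates. -/

theorem HasDerivAt.norm_sq_le_of_eventually_norm_sub_sq_le {F : Type*} [NormedAddCommGroup F]
    [NormedSpace ℝ F] {f : ℝ → F} {f' : F} {x c : ℝ} (hf : HasDerivAt f f' x)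
    (h : ∀ᶠ t in 𝓝 x, ‖f t - f x‖ ^ 2 ≤ c * (t - x) ^ 2) : ‖f'‖ ^ 2 ≤ c := by
  refine le_of_tendsto ((hasDerivAt_iff_tendsto_slope.1 hf).norm.pow 2) ?_
  filter_upwards [self_mem_nhdsWithin, nhdsWithin_le_nhds h] with t (ht : t ≠ x) hle
  have : 0 < (t - x) ^ 2 := by positivity
  rw [slope_def_module, norm_smul, mul_pow, norm_inv, Real.norm_eq_abs, inv_pow, sq_abs,
    inv_mul_le_iff₀ this, mul_comm]
  exact hle

theorem LinearMap.apply_eq_dotProduct_single {ι R : Type*} [Fintype ι] [DecidableEq ι]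
    [CommSemiring R] (ℓ : (ι → R) →ₗ[R] R) (v : ι → R) :
    ℓ v = v ⬝ᵥ fun j => ℓ (Pi.single j 1) := by
  conv_lhs => rw [pi_eq_sum_univ' v]
  simp only [map_sum, map_smul, smul_eq_mul, dotProduct]

theorem Matrix.dotProduct_vecMulVec_mulVec {m n R : Type*} [Fintype m] [Fintype n]
    [CommSemiring R] (u a : m → R) (b v : n → R) :
    u ⬝ᵥ vecMulVec a b *ᵥ v = (u ⬝ᵥ a) * (b ⬝ᵥ v) := by
  rw [vecMulVec_mulVec, dotProduct_smul, MulOpposite.smul_eq_mul_unop, MulOpposite.unop_op]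

theorem integral_dotProduct_mulVec {X m n : Type*} [MeasurableSpace X] [Fintype m] [Fintype n]
    {μ : Measure X} (A : X → Matrix m n ℝ) (hA : ∀ j k, Integrable (fun x => A x j k) μ)
    (u : m → ℝ) (v : n → ℝ) :
    u ⬝ᵥ (of fun j k => ∫ x, A x j k ∂μ) *ᵥ v = ∫ x, u ⬝ᵥ A x *ᵥ v ∂μ := by
  have hterm : ∀ j k, Integrable (fun x => u j * (A x j k * v k)) μ := fun j k =>
    ((hA j k).mul_const _).const_mul _
  simp only [dotProduct, mulVec, of_apply, Finset.mul_sum]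
  rw [integral_finsetSum _ fun j _ => integrable_finsetSum _ fun k _ => hterm j k]
  refine Finset.sum_congr rfl fun j _ => ?_
  rw [integral_finsetSum _ fun k _ => hterm j k]
  simp only [integral_const_mul, integral_mul_const]

/-- An ε-approximate continuous parameter symmetry with velocity
`v` gives `vᵀ M(θ₀) v ≤ ε`, where `M(θ₀)` is the Gram matrix of parameter
gradients under a probability measure `μ`. -/
theorem approx_symmetry_gram_quadratic_form_le
    {X : Type*} [MeasurableSpace X] {p : ℕ}
    (μ : Measure X) [IsProbabilityMeasure μ]
    (N : X → (Fin p → ℝ) → ℝ)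
    (θ₀ : Fin p → ℝ)
    (hN : ∀ x : X, DifferentiableAt ℝ (N x) θ₀)
    (hint : ∀ j k : Fin p, Integrable
      (fun x => fderiv ℝ (N x) θ₀ (Pi.single j 1) *
        fderiv ℝ (N x) θ₀ (Pi.single k 1)) μ)
    (M : Matrix (Fin p) (Fin p) ℝ)
    (hM : ∀ j k : Fin p, M j k =
      ∫ x, fderiv ℝ (N x) θ₀ (Pi.single j 1) *
        fderiv ℝ (N x) θ₀ (Pi.single k 1) ∂μ)
    (T : ℝ → (Fin p → ℝ))
    (hT0 : T 0 = θ₀)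
    (hT : DifferentiableAt ℝ T 0)
    (v : Fin p → ℝ) (hv : v = deriv T 0)
    (ε : ℝ)
    (hsym : ∀ x : X, ∀ᶠ α in nhds (0 : ℝ),
      |N x (T α) - N x θ₀| ^ 2 ≤ ε * α ^ 2) :
    v ⬝ᵥ M.mulVec v ≤ ε := by
  set grad : X → Fin p → ℝ := fun x j => fderiv ℝ (N x) θ₀ (Pi.single j 1)
  have hM' : M = of fun j k => ∫ x, vecMulVec (grad x) (grad x) j k ∂μ := Matrix.ext hM
  have hgrad : ∀ x, fderiv ℝ (N x) θ₀ v = v ⬝ᵥ grad x := fun x =>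
    (fderiv ℝ (N x) θ₀ : (Fin p → ℝ) →ₗ[ℝ] ℝ).apply_eq_dotProduct_single v
  have hquad : ∀ x, v ⬝ᵥ vecMulVec (grad x) (grad x) *ᵥ v = fderiv ℝ (N x) θ₀ v ^ 2 := by
    intro x
    rw [dotProduct_vecMulVec_mulVec, dotProduct_comm (grad x), hgrad, sq]
  have hbound : ∀ x, fderiv ℝ (N x) θ₀ v ^ 2 ≤ ε := by
    intro x
    have hD : HasDerivAt (fun α => N x (T α)) (fderiv ℝ (N x) θ₀ v) 0 :=
      (hN x).hasFDerivAt.comp_hasDerivAt_of_eq 0 (hv ▸ hT.hasDerivAt) hT0.symm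
    simpa using hD.norm_sq_le_of_eventually_norm_sub_sq_le (c := ε) <|
      (hsym x).mono fun α hα => by simpa [hT0] using hα
  calc v ⬝ᵥ M *ᵥ v = ∫ x, fderiv ℝ (N x) θ₀ v ^ 2 ∂μ := by
        rw [hM', integral_dotProduct_mulVec (fun x => vecMulVec (grad x) (grad x)) hint]
        simp_rw [hquad]
    _ ≤ ∫ _, ε ∂μ := integral_mono_of_nonneg (ae_of_all _ fun _ => sq_nonneg _)
        (integrable_const ε) (ae_of_all _ hbound)
    _ = ε := by simp
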